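/- Let p ≥ 2, τ ∈ (0,1), ϑ ∈ (0,1), α ∈ (0,1) and R₀ > 0, set λ₀ := exp(exp(ϑ^(−1/α))) and ω(r) := ϑ^(−1) · [log(log(λ₀R₀/r))]^(−α) for r ∈ (0, R₀], and define ω̃(r) := τ·ω(r)·exp(−(τ·ω(r))^(−1/α)). Then for every γ ∈ (0,1) there exists a constant c ≥ 1, depending on p, τ, ϑ, α and γ but not on R₀, such that ω̃(r)^(1−p) ≤ c·(R₀/r)^(pγ) for all r ∈ (0, R₀]. -/

import Mathlib

/-!
Write `L = log ℓ` with `ℓ = log (λ₀R₀/r) = e^{ϑ^{-1/α}} + log (R₀/r) ≥ 1` and `c = τ/ϑ`. Then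
`τω(r) = c L^{-α}` and `(τω(r))^{-1/α} = c^{-1/α} L`, so
`ω̃(r)^{1-p} = c^{1-p} L^{α(p-1)} e^{(p-1)c^{-1/α} L} ≤ c^{1-p} ℓ^{(p-1)(α + c^{-1/α})}`
using `L ≤ e^L = ℓ`. Thus `ω̃^{1-p}` is a power of `ℓ`, which is a constant plus `log (R₀/r)`,
and every power of a logarithm is dominated by any positive power of `R₀/r`.
-/

/-- The modulus of continuity `ω(r) = ϑ⁻¹ [log(log(λ₀R₀/r))]^(−α)`
with `λ₀ = exp(exp(ϑ^(−1/α)))`. -/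
noncomputable def omegaMod (ϑ α R₀ r : ℝ) : ℝ :=
  ϑ⁻¹ * (Real.log (Real.log (Real.exp (Real.exp (ϑ ^ (-1 / α))) * R₀ / r))) ^ (-α)

/-- The intrinsic quantity `ω̃(r) = τ ω(r) exp(−(τω(r))^(−1/α))`. -/
noncomputable def omegaTilde (τ ϑ α R₀ r : ℝ) : ℝ :=
  τ * omegaMod ϑ α R₀ r * Real.exp (-(τ * omegaMod ϑ α R₀ r) ^ (-1 / α))

open Real

lemma rpow_le_exp_mul {L a : ℝ} (hL : 0 ≤ L) (ha : 0 ≤ a) : L ^ a ≤ exp (a * L) :=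
  calc L ^ a ≤ exp L ^ a := rpow_le_rpow hL (by linarith [add_one_le_exp L]) ha
    _ = exp (a * L) := by rw [← exp_mul, mul_comm]

lemma add_log_le_mul_rpow {a ε t : ℝ} (ha : 0 ≤ a) (hε : 0 < ε) (ht : 1 ≤ t) :
    a + log t ≤ (a + ε⁻¹) * t ^ ε := by
  have h_one_le : 1 ≤ t ^ ε := one_le_rpow ht hε.le
  have h_log : log t ≤ ε⁻¹ * t ^ ε := by
    rw [← div_eq_inv_mul]; exact log_le_rpow_div (by linarith) hε
  nlinarith

lemma add_log_rpow_le {a K δ t : ℝ} (ha : 0 ≤ a) (hK : 0 < K) (hδ : 0 < δ) (ht : 1 ≤ t) :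
    (a + log t) ^ K ≤ (a + K / δ) ^ K * t ^ δ := by
  have hε : 0 < δ / K := div_pos hδ hK
  calc (a + log t) ^ K ≤ ((a + K / δ) * t ^ (δ / K)) ^ K := by
        refine rpow_le_rpow (by linarith [log_nonneg ht]) ?_ hK.le
        simpa only [inv_div] using add_log_le_mul_rpow ha hε ht
    _ = (a + K / δ) ^ K * t ^ δ := by
        rw [mul_rpow (by positivity) (by positivity), ← rpow_mul (by linarith),
          div_mul_cancel₀ _ hK.ne']

lemma mul_rpow_neg_rpow_neg_one_div {c L α : ℝ} (hc : 0 ≤ c) (hL : 0 ≤ L) (hα : α ≠ 0) :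
    (c * L ^ (-α)) ^ (-1 / α) = c ^ (-1 / α) * L := by
  rw [mul_rpow hc (rpow_nonneg hL _), ← rpow_mul hL, show -α * (-1 / α) = 1 by field_simp,
    rpow_one]

lemma mul_exp_neg_rpow_neg {s u q : ℝ} (hs : 0 ≤ s) :
    (s * exp (-u)) ^ (-q) = s ^ (-q) * exp (q * u) := by
  rw [mul_rpow hs (exp_pos _).le, ← exp_mul]
  ring_nf

lemma mul_log_rpow_neg_mul_exp_rpow_neg_le {c α q ℓ : ℝ} (hc : 0 < c) (hα : 0 < α) (hq : 0 ≤ q)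
    (hℓ : 1 ≤ ℓ) :
    (c * log ℓ ^ (-α) * exp (-(c * log ℓ ^ (-α)) ^ (-1 / α))) ^ (-q)
      ≤ c ^ (-q) * ℓ ^ (q * (α + c ^ (-1 / α))) := by
  set L := log ℓ
  have hL : 0 ≤ L := log_nonneg hℓ
  have h_pow : L ^ (-α * -q) ≤ exp (α * q * L) := by
    rw [neg_mul_neg]; exact rpow_le_exp_mul hL (by positivity)
  have h_exp : ℓ = exp L := (exp_log (by linarith)).symm
  rw [mul_exp_neg_rpow_neg (by positivity), mul_rpow_neg_rpow_neg_one_div hc.le hL hα.ne',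
    mul_rpow hc.le (rpow_nonneg hL _), ← rpow_mul hL, mul_assoc]
  calc c ^ (-q) * (L ^ (-α * -q) * exp (q * (c ^ (-1 / α) * L)))
      ≤ c ^ (-q) * (exp (α * q * L) * exp (q * (c ^ (-1 / α) * L))) := by gcongr
    _ = c ^ (-q) * ℓ ^ (q * (α + c ^ (-1 / α))) := by
        rw [← exp_add, h_exp, ← exp_mul]
        ring_nf

lemma mul_omegaMod (τ ϑ α R₀ r : ℝ) :
    τ * omegaMod ϑ α R₀ r
      = τ / ϑ * log (log (exp (exp (ϑ ^ (-1 / α))) * R₀ / r)) ^ (-α) := by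
  rw [omegaMod]; ring

lemma omegaTilde_rpow_one_sub_le {τ ϑ α p R₀ r : ℝ} (hτ : 0 < τ) (hϑ : 0 < ϑ) (hα : 0 < α)
    (hp : 1 ≤ p) (hℓ : 1 ≤ log (exp (exp (ϑ ^ (-1 / α))) * R₀ / r)) :
    omegaTilde τ ϑ α R₀ r ^ (1 - p) ≤ (τ / ϑ) ^ (1 - p) *
      log (exp (exp (ϑ ^ (-1 / α))) * R₀ / r) ^ ((p - 1) * (α + (τ / ϑ) ^ (-1 / α))) := by
  have h := mul_log_rpow_neg_mul_exp_rpow_neg_le (div_pos hτ hϑ) hα (sub_nonneg.2 hp) hℓ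
  rwa [neg_sub, ← mul_omegaMod] at h

lemma log_exp_mul_div {b R r : ℝ} (h : 0 < R / r) : log (exp b * R / r) = b + log (R / r) := by
  rw [mul_div_assoc, log_mul (exp_ne_zero _) h.ne', log_exp]

/-- The power bound used in the proof of Theorem 1.2 of the paper: for every
`γ ∈ (0,1)` there is a constant `c ≥ 1` (independent of `R₀`) with
`ω̃(r)^(1−p) ≤ c (R₀/r)^(pγ)` for all `r ∈ (0,R₀]`. -/
theorem omegaTilde_power_bound (p τ ϑ α γ : ℝ)
    (hp : 2 ≤ p) (hτ : τ ∈ Set.Ioo (0 : ℝ) 1)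
    (hϑ : ϑ ∈ Set.Ioo (0 : ℝ) 1) (hα : α ∈ Set.Ioo (0 : ℝ) 1)
    (hγ : γ ∈ Set.Ioo (0 : ℝ) 1) :
    ∃ c : ℝ, 1 ≤ c ∧ ∀ R₀ : ℝ, 0 < R₀ → ∀ r ∈ Set.Ioc (0 : ℝ) R₀,
      omegaTilde τ ϑ α R₀ r ^ (1 - p) ≤ c * (R₀ / r) ^ (p * γ) := by
  obtain ⟨hτ, -⟩ := hτ
  obtain ⟨hϑ, -⟩ := hϑ
  obtain ⟨hα, -⟩ := hα
  obtain ⟨hγ, -⟩ := hγ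
  set a := exp (ϑ ^ (-1 / α))
  set K := (p - 1) * (α + (τ / ϑ) ^ (-1 / α))
  have hK : 0 < K := mul_pos (by linarith) (by positivity)
  refine ⟨max 1 ((τ / ϑ) ^ (1 - p) * (a + K / (p * γ)) ^ K), le_max_left _ _,
    fun R₀ hR₀ r ⟨hr, hrR⟩ => ?_⟩
  have ht : 1 ≤ R₀ / r := (one_le_div hr).2 hrR
  have hℓ : log (exp a * R₀ / r) = a + log (R₀ / r) := log_exp_mul_div (by positivity)
  have ha : 1 ≤ a := one_le_exp (by positivity)
  calc omegaTilde τ ϑ α R₀ r ^ (1 - p) ≤ (τ / ϑ) ^ (1 - p) * (a + log (R₀ / r)) ^ K := by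
        rw [← hℓ]
        exact omegaTilde_rpow_one_sub_le hτ hϑ hα (by linarith)
          (by rw [hℓ]; linarith [log_nonneg ht])
    _ ≤ (τ / ϑ) ^ (1 - p) * ((a + K / (p * γ)) ^ K * (R₀ / r) ^ (p * γ)) := by
        gcongr
        exact add_log_rpow_le (by positivity) hK (by positivity) ht
    _ ≤ max 1 ((τ / ϑ) ^ (1 - p) * (a + K / (p * γ)) ^ K) * (R₀ / r) ^ (p * γ) := by
        rw [← mul_assoc]
        gcongr
        exact le_max_right _ _
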